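/- Conversely, let P be a row-stochastic n × n matrix and R a relation on distributions over n states such that μ R ν implies (μP) R (νP), where R is given by a matrix E containing the all-ones column, i.e., μ R ν iff (μ−ν)E = 0. Then E is P-stable: for every ρ ∈ ℝ^n with ρE = 0 we have ρPE = 0. -/

import Mathlib

open Matrix BigOperators

/-- A probability distribution on `Fin n`, viewed as a vector in `ℝ^n`. -/
def IsDist {n : ℕ} (μ : Fin n → ℝ) : Prop :=
  (∀ i, 0 ≤ μ i) ∧ ∑ i, μ i = 1

section ZeroSumDecomposition

variable {n : ℕ} {ι : Type*} [Fintype ι]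

lemma isDist_inv_sum_smul {μ : Fin n → ℝ} (hμ : ∀ i, 0 ≤ μ i) (hsum : ∑ i, μ i ≠ 0) :
    IsDist ((∑ i, μ i)⁻¹ • μ) := by
  refine ⟨fun i => smul_nonneg (inv_nonneg.mpr (Finset.sum_nonneg fun j _ => hμ j)) (hμ i), ?_⟩
  simp only [Pi.smul_apply, smul_eq_mul, ← Finset.mul_sum, inv_mul_cancel₀ hsum]

lemma sum_negPart_eq_sum_posPart {ρ : ι → ℝ} (hρ : ∑ i, ρ i = 0) :
    ∑ i, ρ⁻ i = ∑ i, ρ⁺ i := by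
  have h := congrArg (fun v : ι → ℝ => ∑ i, v i) (posPart_sub_negPart ρ)
  simp only [Pi.sub_apply, Finset.sum_sub_distrib, hρ] at h
  linarith

lemma sum_posPart_ne_zero {ρ : ι → ℝ} (hρ : ∑ i, ρ i = 0) (hne : ρ ≠ 0) :
    ∑ i, ρ⁺ i ≠ 0 := by
  intro hpos
  have hneg := (sum_negPart_eq_sum_posPart hρ).trans hpos
  rw [Finset.sum_eq_zero_iff_of_nonneg fun i _ => posPart_nonneg ρ i] at hpos
  rw [Finset.sum_eq_zero_iff_of_nonneg fun i _ => negPart_nonneg ρ i] at hneg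
  refine hne (funext fun i => ?_)
  rw [← posPart_sub_negPart ρ, Pi.sub_apply, hpos i (Finset.mem_univ i),
    hneg i (Finset.mem_univ i), sub_zero, Pi.zero_apply]

/-- Normalize the positive and negative parts of `ρ`, which have the same total mass. -/
theorem exists_pos_smul_sub_isDist {ρ : Fin n → ℝ} (hρ : ∑ i, ρ i = 0) (hne : ρ ≠ 0) :
    ∃ c : ℝ, 0 < c ∧ ∃ μ ν : Fin n → ℝ, IsDist μ ∧ IsDist ν ∧ ρ = c • (μ - ν) := by
  set s := ∑ i, ρ⁺ i
  have hs : s ≠ 0 := sum_posPart_ne_zero hρ hne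
  have hs_pos : 0 < s := lt_of_le_of_ne (Finset.sum_nonneg fun i _ => posPart_nonneg ρ i) hs.symm
  refine ⟨s, hs_pos, s⁻¹ • ρ⁺, s⁻¹ • ρ⁻,
    isDist_inv_sum_smul (posPart_nonneg ρ) hs, ?_, ?_⟩
  · have hsum := sum_negPart_eq_sum_posPart hρ
    simpa only [hsum] using isDist_inv_sum_smul (negPart_nonneg ρ) (hsum ▸ hs)
  · rw [← smul_sub, smul_inv_smul₀ hs, posPart_sub_negPart]

end ZeroSumDecomposition

lemma sum_eq_zero_of_vecMul_eq_zero {m k R : Type*} [Fintype m] [Semiring R]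
    {E : Matrix m k R} {c : k} (hc : ∀ i, E i c = 1) {ρ : m → R} (hρ : vecMul ρ E = 0) :
    ∑ i, ρ i = 0 := by
  simpa [vecMul, dotProduct, hc] using congrFun hρ c

theorem step_preservation_gives_stable_matrix_general {n k : ℕ}
    (P : Matrix (Fin n) (Fin n) ℝ)
    (E : Matrix (Fin n) (Fin k) ℝ)
    (hones : ∃ c : Fin k, ∀ i, E i c = 1)
    (hpres : ∀ μ ν : Fin n → ℝ, IsDist μ → IsDist ν → Matrix.vecMul (μ - ν) E = 0 →
      Matrix.vecMul (Matrix.vecMul μ P - Matrix.vecMul ν P) E = 0) :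
    ∀ ρ : Fin n → ℝ, Matrix.vecMul ρ E = 0 → Matrix.vecMul (Matrix.vecMul ρ P) E = 0 := by
  intro ρ hρE
  obtain ⟨c, hc⟩ := hones
  rcases eq_or_ne ρ 0 with rfl | hρ
  · simp
  obtain ⟨s, hs, μ, ν, hμ, hν, rfl⟩ :=
    exists_pos_smul_sub_isDist (sum_eq_zero_of_vecMul_eq_zero hc hρE) hρ
  have hμν : vecMul (μ - ν) E = 0 := by
    rwa [smul_vecMul, smul_eq_zero_iff_right hs.ne'] at hρE
  rw [smul_vecMul, smul_vecMul, sub_vecMul, hpres μ ν hμ hν hμν, smul_zero]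

/-- Conversely, if the relation `μ R ν ↔ (μ - ν) E = 0` (with `E` containing the
all-ones column) is preserved by a row-stochastic `P` on distributions, then `E`
is `P`-stable. -/
theorem step_preservation_gives_stable_matrix {n k : ℕ}
    (P : Matrix (Fin n) (Fin n) ℝ)
    (hPnn : ∀ i j, 0 ≤ P i j) (hProw : ∀ i, ∑ j, P i j = 1)
    (E : Matrix (Fin n) (Fin k) ℝ)
    (hones : ∃ c : Fin k, ∀ i, E i c = 1)
    (hpres : ∀ μ ν : Fin n → ℝ, IsDist μ → IsDist ν → Matrix.vecMul (μ - ν) E = 0 →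
      Matrix.vecMul (Matrix.vecMul μ P - Matrix.vecMul ν P) E = 0) :
    ∀ ρ : Fin n → ℝ, Matrix.vecMul ρ E = 0 → Matrix.vecMul (Matrix.vecMul ρ P) E = 0 :=
  step_preservation_gives_stable_matrix_general P E hones hpres
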